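/- Suppose the columns a_1,…,a_n of A generate ℤ^d as a ℤ-module and ℕA is positive. Then every coset of ℤ^d in ℚ^d contains a non-strongly-resonant parameter: for every β ∈ ℚ^d there exists α ∈ ℤ^d such that β + α ∉ sRes(A) (ℚ^d being viewed inside ℂ^d). -/
import Mathlib


noncomputable section

open scoped BigOperators

variable {d n : ℕ}

/-- The `i`-th column of the integer matrix `A`, as a vector in `ℤ^d`. -/
def colZ (A : Matrix (Fin d) (Fin n) ℤ) (i : Fin n) : Fin d → ℤ := fun k => A k i

/-- The `i`-th column of `A`, viewed in `ℝ^d`. -/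
def colR (A : Matrix (Fin d) (Fin n) ℤ) (i : Fin n) : Fin d → ℝ := fun k => (A k i : ℝ)

/-- The `i`-th column of `A`, viewed in `ℂ^d`. -/
def colC (A : Matrix (Fin d) (Fin n) ℤ) (i : Fin n) : Fin d → ℂ := fun k => (A k i : ℂ)

/-- The canonical embedding `ℤ^d → ℂ^d`. -/
def zToC (m : Fin d → ℤ) : Fin d → ℂ := fun k => (m k : ℂ)

/-- The canonical embedding `ℝ^d → ℂ^d`. -/
def rToC (x : Fin d → ℝ) : Fin d → ℂ := fun k => (x k : ℂ)

/-- The canonical embedding `ℚ^d → ℂ^d`. -/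
def qToC (x : Fin d → ℚ) : Fin d → ℂ := fun k => (x k : ℂ)

/-- `ℕA`, the semigroup generated by the columns of `A` in `ℤ^d`. -/
def NA (A : Matrix (Fin d) (Fin n) ℤ) : Set (Fin d → ℤ) :=
  {m | ∃ γ : Fin n → ℕ, m = ∑ i, (γ i : ℤ) • colZ A i}

/-- `ℝ₊A`, the cone of nonnegative real combinations of the columns of `A` in `ℝ^d`. -/
def RplusA (A : Matrix (Fin d) (Fin n) ℤ) : Set (Fin d → ℝ) :=
  {x | ∃ c : Fin n → ℝ, (∀ i, 0 ≤ c i) ∧ x = ∑ i, c i • colR A i}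

/-- `ℚ₊A`, the nonnegative rational combinations of the columns of `A` in `ℚ^d`. -/
def QplusA (A : Matrix (Fin d) (Fin n) ℤ) : Set (Fin d → ℚ) :=
  {x | ∃ c : Fin n → ℚ, (∀ i, 0 ≤ c i) ∧ x = ∑ i, c i • (fun k => (A k i : ℚ))}

/-- The Zariski closure of a subset of `ℂ^d`: the common zeros of all polynomials
vanishing on it. -/
def zclosure (S : Set (Fin d → ℂ)) : Set (Fin d → ℂ) :=
  {x | ∀ p : MvPolynomial (Fin d) ℂ,
    (∀ s ∈ S, MvPolynomial.eval s p = 0) → MvPolynomial.eval x p = 0}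

/-- `qdeg_j(A)`: the Zariski closure in `ℂ^d` of `ℕA \ (a_j + ℕA)`. -/
def qdeg (A : Matrix (Fin d) (Fin n) ℤ) (j : Fin n) : Set (Fin d → ℂ) :=
  zclosure (zToC '' (NA A \ {m | ∃ m' ∈ NA A, m = colZ A j + m'}))

/-- `sRes(A) = ⋃_j ⋃_{l ∈ ℕ} ( -(l+1)·a_j + qdeg_j(A) )`, the set of strongly
resonant parameters of `A`. -/
def sRes (A : Matrix (Fin d) (Fin n) ℤ) : Set (Fin d → ℂ) :=
  ⋃ j : Fin n, ⋃ l : ℕ, (fun q => q - ((l : ℂ) + 1) • colC A j) '' qdeg A j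

open Matrix in
lemma SRA_iq_dot (h z : Fin d → ℤ) :
    (fun k => (h k : ℚ)) ⬝ᵥ (fun k => (z k : ℚ)) = ((h ⬝ᵥ z : ℤ) : ℚ) := by
  simp [dotProduct]

open Matrix in
lemma SRA_dot_sumZ {ι : Type*} (s : Finset ι) (h : Fin d → ℤ) (f : ι → (Fin d → ℤ)) :
    h ⬝ᵥ (∑ i ∈ s, f i) = ∑ i ∈ s, h ⬝ᵥ f i := by
  simp only [dotProduct, Finset.sum_apply, Finset.mul_sum]
  exact Finset.sum_comm

lemma SRA_exists_list_min {α : Type*} (f : α → ℚ) :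
    ∀ (l : List α), l ≠ [] → ∃ y ∈ l, ∀ z ∈ l, f y ≤ f z := by
  intro l
  induction l with
  | nil => intro h; simp at h
  | cons a t ih =>
    intro _
    rcases eq_or_ne t [] with rfl | ht
    · refine ⟨a, by simp, ?_⟩
      intro z hz; simp at hz; subst hz; exact le_rfl
    · obtain ⟨y, hy, hmin⟩ := ih ht
      rcases le_total (f a) (f y) with h | h
      · refine ⟨a, by simp, ?_⟩
        intro z hz
        rcases List.mem_cons.mp hz with rfl | hz
        · exact le_rfl
        · exact le_trans h (hmin z hz)
      · refine ⟨y, List.mem_cons_of_mem _ hy, ?_⟩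
        intro z hz
        rcases List.mem_cons.mp hz with rfl | hz
        · exact h
        · exact hmin z hz

lemma SRA_le_foldr_max (l : List ℚ) (y : ℚ) (hy : y ∈ l) : y ≤ l.foldr max 0 := by
  induction l with
  | nil => simp at hy
  | cons a t ih =>
    rcases List.mem_cons.mp hy with rfl | hy
    · exact le_max_left _ _
    · exact le_trans (ih hy) (le_max_right _ _)

lemma SRA_foldr_max_nonneg (l : List ℚ) : 0 ≤ l.foldr max 0 := by
  induction l with
  | nil => simp
  | cons a t ih => exact le_trans ih (le_max_right _ _)

open Matrix in
lemma SRA_weyl (d : ℕ) : ∀ (n : ℕ) (a : Fin n → (Fin d → ℚ)),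
    ∃ L : List (Fin d → ℚ), ∀ x : Fin d → ℚ,
      ((∃ c : Fin n → ℚ, (∀ i, 0 ≤ c i) ∧ x = ∑ i, c i • a i) ↔ ∀ h ∈ L, 0 ≤ h ⬝ᵥ x) := by
  intro n
  induction n with
  | zero =>
    intro a
    refine ⟨((List.finRange d).map fun k => Pi.single k 1) ++
      ((List.finRange d).map fun k => Pi.single k (-1)), fun x => ?_⟩
    constructor
    · rintro ⟨c, -, rfl⟩
      intro h hh
      simp
    · intro hx
      refine ⟨Fin.elim0, fun i => i.elim0, ?_⟩
      have hz : x = 0 := by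
        funext k
        have h1 := hx (Pi.single k 1)
          (List.mem_append.mpr (Or.inl (List.mem_map.mpr ⟨k, List.mem_finRange k, rfl⟩)))
        have h2 := hx (Pi.single k (-1))
          (List.mem_append.mpr (Or.inr (List.mem_map.mpr ⟨k, List.mem_finRange k, rfl⟩)))
        rw [single_dotProduct, one_mul] at h1
        rw [single_dotProduct] at h2
        have hle : x k ≤ 0 := by linarith
        exact le_antisymm hle h1
      simp [hz]
  | succ m ih =>
    intro a
    obtain ⟨L, hL⟩ := ih (fun i => a i.succ)
    set a0 := a 0 with ha0
    set Lz := L.filter (fun h => h ⬝ᵥ a0 = 0) with hLzdef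
    set Lp := L.filter (fun h => 0 < h ⬝ᵥ a0) with hLpdef
    set Ln := L.filter (fun h => h ⬝ᵥ a0 < 0) with hLndef
    set Lc := Lp.flatMap (fun r => Ln.map (fun s => (r ⬝ᵥ a0) • s - (s ⬝ᵥ a0) • r)) with hLcdef
    refine ⟨Lz ++ Lp ++ Lc, fun x => ?_⟩
    constructor
    · rintro ⟨c, hc, rfl⟩
      have hsum : ∑ i, c i • a i = (∑ i : Fin m, c i.succ • a i.succ) + c 0 • a0 := by
        rw [Fin.sum_univ_succ, add_comm]
      set y := ∑ i : Fin m, c i.succ • a i.succ with hy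
      have hyc : ∀ h ∈ L, 0 ≤ h ⬝ᵥ y := (hL y).mp ⟨fun i => c i.succ, fun i => hc _, rfl⟩
      have ht0 : 0 ≤ c 0 := hc 0
      intro h hh
      rw [hsum]
      rcases List.mem_append.mp hh with hh' | hcomb
      · rcases List.mem_append.mp hh' with hz | hp
        · have hmf := List.mem_filter.mp hz
          have hdz : h ⬝ᵥ a0 = 0 := by simpa using hmf.2
          have hy0 := hyc h hmf.1
          rw [dotProduct_add, dotProduct_smul]
          simp only [smul_eq_mul, hdz, mul_zero, add_zero]
          exact hy0
        · have hmf := List.mem_filter.mp hp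
          have hdp : 0 < h ⬝ᵥ a0 := by simpa using hmf.2
          have hy0 := hyc h hmf.1
          rw [dotProduct_add, dotProduct_smul]
          simp only [smul_eq_mul]
          have : 0 ≤ c 0 * (h ⬝ᵥ a0) := mul_nonneg ht0 hdp.le
          linarith
      · rcases List.mem_flatMap.mp hcomb with ⟨r, hr, hs⟩
        rcases List.mem_map.mp hs with ⟨s, hsmem, rfl⟩
        have hrm := List.mem_filter.mp hr
        have hsm := List.mem_filter.mp hsmem
        have hrp : 0 < r ⬝ᵥ a0 := by simpa using hrm.2
        have hsn : s ⬝ᵥ a0 < 0 := by simpa using hsm.2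
        have hry := hyc r hrm.1
        have hsy := hyc s hsm.1
        rw [sub_dotProduct, smul_dotProduct, smul_dotProduct, dotProduct_add, dotProduct_add,
          dotProduct_smul, dotProduct_smul]
        simp only [smul_eq_mul]
        nlinarith [mul_nonneg hrp.le hsy, mul_nonneg (neg_nonneg.mpr hsn.le) hry]
    · intro hx
      obtain ⟨t, ht0, htp, htn⟩ :
          ∃ t : ℚ, 0 ≤ t ∧ (∀ h ∈ L, 0 < h ⬝ᵥ a0 → t * (h ⬝ᵥ a0) ≤ h ⬝ᵥ x) ∧
            (∀ h ∈ L, h ⬝ᵥ a0 < 0 → t * (h ⬝ᵥ a0) ≤ h ⬝ᵥ x) := by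
        rcases eq_or_ne Lp [] with hLpe | hLpe
        · refine ⟨(Ln.map fun s => (s ⬝ᵥ x) / (s ⬝ᵥ a0)).foldr max 0,
            SRA_foldr_max_nonneg _, ?_, ?_⟩
          · intro h hh hpos
            exfalso
            have : h ∈ Lp := List.mem_filter.mpr ⟨hh, by simpa using hpos⟩
            rw [hLpe] at this
            simp at this
          · intro h hh hneg
            have hmem : (h ⬝ᵥ x) / (h ⬝ᵥ a0) ∈ Ln.map fun s => (s ⬝ᵥ x) / (s ⬝ᵥ a0) :=
              List.mem_map.mpr ⟨h, List.mem_filter.mpr ⟨hh, by simpa using hneg⟩, rfl⟩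
            have hle := SRA_le_foldr_max _ _ hmem
            have hmul := mul_le_mul_of_nonpos_right hle hneg.le
            rw [div_mul_cancel₀ _ hneg.ne] at hmul
            linarith
        · obtain ⟨y0, hy0mem, hy0min⟩ :=
            SRA_exists_list_min (fun s => (s ⬝ᵥ x) / (s ⬝ᵥ a0)) Lp hLpe
          have hy0f := List.mem_filter.mp hy0mem
          have hy0p : 0 < y0 ⬝ᵥ a0 := by simpa using hy0f.2
          have hy0x : 0 ≤ y0 ⬝ᵥ x :=
            hx y0 (List.mem_append.mpr (Or.inl (List.mem_append.mpr (Or.inr hy0mem))))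
          refine ⟨(y0 ⬝ᵥ x) / (y0 ⬝ᵥ a0), div_nonneg hy0x hy0p.le, ?_, ?_⟩
          · intro h hh hpos
            have hhp : h ∈ Lp := List.mem_filter.mpr ⟨hh, by simpa using hpos⟩
            have hminle := hy0min h hhp
            calc (y0 ⬝ᵥ x) / (y0 ⬝ᵥ a0) * (h ⬝ᵥ a0) ≤ (h ⬝ᵥ x) / (h ⬝ᵥ a0) * (h ⬝ᵥ a0) :=
                  mul_le_mul_of_nonneg_right hminle hpos.le
              _ = h ⬝ᵥ x := div_mul_cancel₀ _ hpos.ne'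
          · intro h hh hneg
            have hhn : h ∈ Ln := List.mem_filter.mpr ⟨hh, by simpa using hneg⟩
            have hcmem : (y0 ⬝ᵥ a0) • h - (h ⬝ᵥ a0) • y0 ∈ Lc :=
              List.mem_flatMap.mpr ⟨y0, hy0mem, List.mem_map.mpr ⟨h, hhn, rfl⟩⟩
            have hcx := hx _ (List.mem_append.mpr (Or.inr hcmem))
            rw [sub_dotProduct, smul_dotProduct, smul_dotProduct] at hcx
            simp only [smul_eq_mul] at hcx
            rw [div_mul_eq_mul_div, div_le_iff₀ hy0p]
            nlinarith [hcx]
      have hyL : ∀ h ∈ L, 0 ≤ h ⬝ᵥ (x - t • a0) := by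
        intro h hh
        rw [dotProduct_sub, dotProduct_smul]
        simp only [smul_eq_mul]
        rcases lt_trichotomy (h ⬝ᵥ a0) 0 with hneg | hzero | hpos
        · have := htn h hh hneg; linarith
        · have hz : h ∈ Lz := List.mem_filter.mpr ⟨hh, by simp [hzero]⟩
          have := hx h (List.mem_append.mpr (Or.inl (List.mem_append.mpr (Or.inl hz))))
          simp only [hzero, mul_zero, sub_zero]
          linarith
        · have := htp h hh hpos; linarith
      obtain ⟨c', hc', hxy⟩ := (hL (x - t • a0)).mpr hyL
      refine ⟨Fin.cons t c', ?_, ?_⟩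
      · intro i
        refine Fin.cases ht0 (fun i => hc' i) i
      · rw [Fin.sum_univ_succ]
        simp only [Fin.cons_zero, Fin.cons_succ]
        exact sub_eq_iff_eq_add'.mp hxy

lemma SRA_NA_zero (A : Matrix (Fin d) (Fin n) ℤ) : (0 : Fin d → ℤ) ∈ NA A :=
  ⟨fun _ => 0, by simp⟩

lemma SRA_NA_add {A : Matrix (Fin d) (Fin n) ℤ} {m1 m2 : Fin d → ℤ}
    (h1 : m1 ∈ NA A) (h2 : m2 ∈ NA A) : m1 + m2 ∈ NA A := by
  obtain ⟨g1, rfl⟩ := h1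
  obtain ⟨g2, rfl⟩ := h2
  refine ⟨fun i => g1 i + g2 i, ?_⟩
  rw [← Finset.sum_add_distrib]
  apply Finset.sum_congr rfl
  intro i _
  rw [← add_smul]
  norm_cast

lemma SRA_NA_sum {ι : Type*} {A : Matrix (Fin d) (Fin n) ℤ} (S : Finset ι) (f : ι → (Fin d → ℤ))
    (h : ∀ r ∈ S, f r ∈ NA A) : (∑ r ∈ S, f r) ∈ NA A :=
  Finset.sum_induction f (· ∈ NA A) (fun _ _ ha hb => SRA_NA_add ha hb) (SRA_NA_zero A) h

open Matrix in
lemma SRA_NA_dot_nonneg {A : Matrix (Fin d) (Fin n) ℤ} (h : Fin d → ℤ)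
    (hcols : ∀ i, 0 ≤ h ⬝ᵥ colZ A i) {m : Fin d → ℤ} (hm : m ∈ NA A) : 0 ≤ h ⬝ᵥ m := by
  obtain ⟨g, rfl⟩ := hm
  rw [SRA_dot_sumZ]
  apply Finset.sum_nonneg
  intro i _
  rw [dotProduct_smul]
  simp only [smul_eq_mul]
  exact mul_nonneg (by positivity) (hcols i)

lemma SRA_intScale (h : Fin d → ℚ) :
    ∃ (hz : Fin d → ℤ) (D : ℚ), 0 < D ∧ ∀ k, (hz k : ℚ) = D * h k := by
  refine ⟨fun k => (h k).num * ∏ k' ∈ Finset.univ.erase k, ((h k').den : ℤ),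
    ∏ k', ((h k').den : ℚ), by positivity, ?_⟩
  intro k
  have hden : ((h k).den : ℚ) ≠ 0 := Nat.cast_ne_zero.mpr (h k).den_nz
  have hnum : ((h k).num : ℚ) = h k * ((h k).den : ℚ) :=
    (div_eq_iff hden).mp (Rat.num_div_den (h k))
  push_cast
  rw [← Finset.mul_prod_erase Finset.univ (fun k' => ((h k').den : ℚ)) (Finset.mem_univ k),
    hnum]
  ring

open Matrix in
lemma SRA_exists_H (A : Matrix (Fin d) (Fin n) ℤ) :
    ∃ H : List (Fin d → ℤ),
      (∀ h ∈ H, ∀ i, 0 ≤ h ⬝ᵥ colZ A i) ∧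
      (∀ h ∈ H, h ≠ 0) ∧
      (∀ x : Fin d → ℚ, (∀ h ∈ H, 0 ≤ (fun k => (h k : ℚ)) ⬝ᵥ x) → x ∈ QplusA A) := by
  classical
  obtain ⟨L, hL⟩ := SRA_weyl d n (fun i => (fun k => (A k i : ℚ)))
  choose hzf Df hDf hzef using fun h : (Fin d → ℚ) => SRA_intScale h
  have hcastdot : ∀ (h : Fin d → ℚ) (x : Fin d → ℚ),
      (fun k => ((hzf h) k : ℚ)) ⬝ᵥ x = Df h * (h ⬝ᵥ x) := by
    intro h x
    have : (fun k => ((hzf h) k : ℚ)) = (Df h) • h := by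
      funext k
      rw [hzef h k]
      rfl
    rw [this, smul_dotProduct]
    rfl
  refine ⟨(L.filter (fun h => ¬ h = 0)).map hzf, ?_, ?_, ?_⟩
  · intro hz hmem i
    obtain ⟨h, hf, rfl⟩ := List.mem_map.mp hmem
    have hhL : h ∈ L := (List.mem_filter.mp hf).1
    have hcol : (fun k => (A k i : ℚ)) ∈
        {x : Fin d → ℚ | ∃ c : Fin n → ℚ, (∀ i', 0 ≤ c i') ∧
          x = ∑ i', c i' • (fun k => (A k i' : ℚ))} := by
      refine ⟨fun i' => if i' = i then 1 else 0, fun i' => by positivity, ?_⟩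
      simp [ite_smul, Finset.sum_ite_eq']
    have hq : 0 ≤ h ⬝ᵥ (fun k => (A k i : ℚ)) := (hL _).mp hcol _ hhL
    have : (0:ℚ) ≤ ((hzf h ⬝ᵥ colZ A i : ℤ) : ℚ) := by
      rw [← SRA_iq_dot]
      have : (fun k => ((colZ A i) k : ℚ)) = (fun k => (A k i : ℚ)) := rfl
      rw [this, hcastdot]
      exact mul_nonneg (hDf h).le hq
    exact_mod_cast this
  · intro hz hmem
    obtain ⟨h, hf, rfl⟩ := List.mem_map.mp hmem
    have hne : h ≠ 0 := by simpa using (List.mem_filter.mp hf).2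
    intro h0
    apply hne
    funext k
    have := hzef h k
    rw [h0] at this
    simp only [Pi.zero_apply, Int.cast_zero] at this
    have := (mul_eq_zero.mp this.symm).resolve_left (hDf h).ne'
    simpa using this
  · intro x hx
    refine (hL x).mpr ?_
    intro h hhL
    by_cases h0 : h = 0
    · subst h0
      simp
    · have hmem : hzf h ∈ (L.filter (fun h => ¬ h = 0)).map hzf :=
        List.mem_map.mpr ⟨h, List.mem_filter.mpr ⟨hhL, by simpa using h0⟩, rfl⟩
      have := hx _ hmem
      rw [hcastdot] at this
      exact nonneg_of_mul_nonneg_right this (hDf h)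

open Matrix in
lemma SRA_absorb (A : Matrix (Fin d) (Fin n) ℤ)
    (hgen : Submodule.span ℤ (Set.range (colZ A)) = ⊤) :
    ∃ c0 ∈ NA A, ∀ z : Fin d → ℤ,
      (fun k => ((z k : ℚ) - (c0 k : ℚ))) ∈ QplusA A → z ∈ NA A := by
  classical
  have hrep : ∀ r : Fin d → ℤ, ∃ zc : Fin n → ℤ, ∑ i, zc i • colZ A i = r := by
    intro r
    have hr : r ∈ Submodule.span ℤ (Set.range (colZ A)) := by rw [hgen]; trivial
    exact (Submodule.mem_span_range_iff_exists_fun ℤ).mp hr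
  have hdecomp : ∀ r : Fin d → ℤ, ∃ Qr Pr, Qr ∈ NA A ∧ Pr ∈ NA A ∧ r + Qr = Pr := by
    intro r
    obtain ⟨w, hw⟩ := hrep r
    refine ⟨∑ i, (((-w i).toNat : ℤ)) • colZ A i, ∑ i, (((w i).toNat : ℤ)) • colZ A i,
      ⟨fun i => (-w i).toNat, rfl⟩, ⟨fun i => (w i).toNat, rfl⟩, ?_⟩
    rw [← hw, ← Finset.sum_add_distrib]
    apply Finset.sum_congr rfl
    intro i _
    rw [← add_smul]
    congr 1
    omega
  choose Q P hQ hP hQP using hdecomp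
  set Bk : Fin d → ℤ := fun k => ∑ i, |A k i| with hBk
  set Box : Finset (Fin d → ℤ) := Finset.Icc (fun k => -(Bk k)) Bk with hBox
  refine ⟨∑ r ∈ Box, Q r, SRA_NA_sum _ _ (fun r _ => hQ r), ?_⟩
  set c0 := ∑ r ∈ Box, Q r with hc0
  intro z hz
  obtain ⟨q, hq0, hqe⟩ := hz
  set f : Fin n → ℕ := fun i => (⌊q i⌋).toNat with hfdef
  have hfl : ∀ i, ((f i : ℤ)) = ⌊q i⌋ := fun i =>
    Int.toNat_of_nonneg (Int.floor_nonneg.mpr (hq0 i))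
  have hf : ∀ i, ((f i : ℚ)) ≤ q i ∧ q i < (f i : ℚ) + 1 := by
    intro i
    have hcast : ((f i : ℚ)) = ((⌊q i⌋ : ℤ) : ℚ) := by rw [← hfl i]; simp
    constructor
    · rw [hcast]; exact Int.floor_le (q i)
    · rw [hcast]; exact Int.lt_floor_add_one (q i)
  set r : Fin d → ℤ := z - c0 - ∑ i, ((f i : ℤ)) • colZ A i with hr
  have hek : ∀ k, (z k : ℚ) - (c0 k : ℚ) = ∑ i, q i * (A k i : ℚ) := by
    intro k
    have := congrFun hqe k
    simpa [Finset.sum_apply, Pi.smul_apply, smul_eq_mul] using this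
  have hrq : ∀ k, ((r k : ℚ)) = ∑ i, (q i - (f i : ℚ)) * (A k i : ℚ) := by
    intro k
    have h1 : (r k : ℚ) = (z k : ℚ) - (c0 k : ℚ) - ∑ i, (f i : ℚ) * (A k i : ℚ) := by
      simp only [hr, Pi.sub_apply, Finset.sum_apply, Pi.smul_apply, smul_eq_mul, colZ]
      push_cast
      ring
    rw [h1, hek k, ← Finset.sum_sub_distrib]
    apply Finset.sum_congr rfl
    intro i _
    ring
  have habs' : ∀ k, |r k| ≤ Bk k := by
    intro k
    have habs : |(r k : ℚ)| ≤ ((Bk k : ℤ) : ℚ) := by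
      rw [hrq k]
      calc |∑ i, (q i - (f i : ℚ)) * (A k i : ℚ)|
          ≤ ∑ i, |(q i - (f i : ℚ)) * (A k i : ℚ)| := Finset.abs_sum_le_sum_abs _ _
        _ ≤ ∑ i, |(A k i : ℚ)| := by
            apply Finset.sum_le_sum
            intro i _
            rw [abs_mul]
            apply mul_le_of_le_one_left (abs_nonneg _)
            rw [abs_le]
            constructor <;> linarith [(hf i).1, (hf i).2]
        _ = ((Bk k : ℤ) : ℚ) := by simp only [hBk]; push_cast; ring
    have : ((|r k| : ℤ) : ℚ) ≤ ((Bk k : ℤ) : ℚ) := by rw [Int.cast_abs]; exact habs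
    exact_mod_cast this
  have hrB : r ∈ Box := by
    rw [hBox, Finset.mem_Icc]
    constructor <;> rw [Pi.le_def] <;> intro k
    · have h1 := (abs_le.mp (habs' k)).1
      show -(Bk k) ≤ r k
      omega
    · exact (abs_le.mp (habs' k)).2
  have hzeq : z = c0 + ((∑ i, ((f i : ℤ)) • colZ A i) + r) := by
    rw [hr]
    abel
  have hsplit : c0 = Q r + ∑ r' ∈ Box.erase r, Q r' := (Finset.add_sum_erase Box Q hrB).symm
  have hfinal : z = (∑ r' ∈ Box.erase r, Q r') + ((∑ i, ((f i : ℤ)) • colZ A i) + (r + Q r)) := by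
    rw [hzeq, hsplit]
    abel
  rw [hQP r] at hfinal
  rw [hfinal]
  exact SRA_NA_add (SRA_NA_sum _ _ (fun r' _ => hQ r')) (SRA_NA_add ⟨f, rfl⟩ (hP r))


open Matrix

/-- If the columns of `A` generate `ℤ^d` and `ℕA` is positive, then every coset
of `ℤ^d` in `ℚ^d` contains a non-strongly-resonant parameter: for each
`β ∈ ℚ^d` there is `α ∈ ℤ^d` with `β + α ∉ sRes(A)`. -/
theorem exists_int_translate_not_sRes (hd : 0 < d) (hn : 0 < n)
    (A : Matrix (Fin d) (Fin n) ℤ)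
    (hgen : Submodule.span ℤ (Set.range (colZ A)) = ⊤)
    (hpos : ∀ m ∈ NA A, -m ∈ NA A → m = 0) :
    ∀ β : Fin d → ℚ, ∃ α : Fin d → ℤ,
      (fun k => ((β k + α k : ℚ) : ℂ)) ∉ sRes A := by
  classical
  intro β
  obtain ⟨H, hHcols, hHne, hHcone⟩ := SRA_exists_H A
  obtain ⟨c0, hc0NA, habs⟩ := SRA_absorb A hgen
  set sZ : Fin d → ℤ := ∑ i, colZ A i with hsZ
  have hsZpos : ∀ h ∈ H, 1 ≤ h ⬝ᵥ sZ := by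
    intro h hh
    have hsum : h ⬝ᵥ sZ = ∑ i, h ⬝ᵥ colZ A i := by rw [hsZ, SRA_dot_sumZ]
    have hnn : 0 ≤ h ⬝ᵥ sZ := by
      rw [hsum]; exact Finset.sum_nonneg fun i _ => hHcols h hh i
    rcases eq_or_lt_of_le hnn with heq | hlt
    · exfalso
      have hall : ∀ i, h ⬝ᵥ colZ A i = 0 := by
        intro i
        exact (Finset.sum_eq_zero_iff_of_nonneg (fun i _ => hHcols h hh i)).mp
          (by rw [← hsum, ← heq]) i (Finset.mem_univ i)
      have hh0 : h ⬝ᵥ h = 0 := by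
        have hmem : (h : Fin d → ℤ) ∈ Submodule.span ℤ (Set.range (colZ A)) := by
          rw [hgen]; trivial
        obtain ⟨c, hc⟩ := (Submodule.mem_span_range_iff_exists_fun ℤ).mp hmem
        have hz : h ⬝ᵥ (∑ i, c i • colZ A i) = 0 := by
          rw [SRA_dot_sumZ]
          apply Finset.sum_eq_zero
          intro i _
          rw [dotProduct_smul, hall i, smul_zero]
        rwa [hc] at hz
      exact hHne h hh (dotProduct_self_eq_zero.mp hh0)
    · omega
  set KL : List ℤ := H.map (fun h => ∑ j, |h ⬝ᵥ (c0 + colZ A j)|) with hKL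
  set K : ℤ := 1 + KL.sum with hK
  have hKLnn : ∀ x ∈ KL, 0 ≤ x := by
    intro x hx
    obtain ⟨h, hh, rfl⟩ := List.mem_map.mp hx
    positivity
  have hKpos : 1 ≤ K := by
    have := List.sum_nonneg hKLnn
    omega
  have hKbound : ∀ h ∈ H, ∀ j : Fin n, h ⬝ᵥ (c0 + colZ A j) ≤ K - 1 := by
    intro h hh j
    have h1 : h ⬝ᵥ (c0 + colZ A j) ≤ |h ⬝ᵥ (c0 + colZ A j)| := le_abs_self _
    have h2 : |h ⬝ᵥ (c0 + colZ A j)| ≤ ∑ j', |h ⬝ᵥ (c0 + colZ A j')| :=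
      Finset.single_le_sum (f := fun j' => |h ⬝ᵥ (c0 + colZ A j')|)
        (fun j' _ => abs_nonneg _) (Finset.mem_univ j)
    have h3 : (∑ j', |h ⬝ᵥ (c0 + colZ A j')|) ≤ KL.sum :=
      List.single_le_sum hKLnn _ (List.mem_map.mpr ⟨h, hh, rfl⟩)
    omega
  set Bβ : ℚ := (H.map (fun h => |(fun k => (h k : ℚ)) ⬝ᵥ β|)).sum with hBβ
  have hBβnn : ∀ x ∈ H.map (fun h => |(fun k => (h k : ℚ)) ⬝ᵥ β|), 0 ≤ x := by
    intro x hx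
    obtain ⟨h, hh, rfl⟩ := List.mem_map.mp hx
    positivity
  set T : ℕ := (K + ⌈Bβ⌉).toNat with hT
  have hTQ : ∀ h ∈ H, (K : ℚ) ≤ (fun k => (h k : ℚ)) ⬝ᵥ β + (T : ℚ) * ((h ⬝ᵥ sZ : ℤ) : ℚ) := by
    intro h hh
    have h1 : -Bβ ≤ (fun k => (h k : ℚ)) ⬝ᵥ β := by
      have habs2 : |(fun k => (h k : ℚ)) ⬝ᵥ β| ≤ Bβ :=
        List.single_le_sum hBβnn _ (List.mem_map.mpr ⟨h, hh, rfl⟩)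
      have := neg_abs_le ((fun k => (h k : ℚ)) ⬝ᵥ β)
      linarith
    have h2 : (1 : ℚ) ≤ ((h ⬝ᵥ sZ : ℤ) : ℚ) := by exact_mod_cast hsZpos h hh
    have h3 : (K : ℚ) + Bβ ≤ (T : ℚ) := by
      have hti : (K + ⌈Bβ⌉ : ℤ) ≤ ((T : ℕ) : ℤ) := Int.self_le_toNat _
      have hc : ((K + ⌈Bβ⌉ : ℤ) : ℚ) ≤ ((T : ℕ) : ℚ) := by exact_mod_cast hti
      have := Int.le_ceil Bβ
      push_cast at hc
      linarith
    have h4 : (T : ℚ) ≤ (T : ℚ) * ((h ⬝ᵥ sZ : ℤ) : ℚ) :=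
      le_mul_of_one_le_right (by positivity) h2
    have hBβ0 : 0 ≤ Bβ := List.sum_nonneg hBβnn
    linarith
  refine ⟨fun k => (T : ℤ) * sZ k, ?_⟩
  intro hmem
  simp only [sRes, Set.mem_iUnion] at hmem
  obtain ⟨j, l, qpt, hq, hqe⟩ := hmem
  have hqpt : qpt = ((l : ℂ) + 1) • colC A j +
      (fun k => ((β k + (((T : ℤ) * sZ k : ℤ) : ℚ) : ℚ) : ℂ)) :=
    sub_eq_iff_eq_add'.mp hqe
  set Knat : ℕ := K.toNat with hKnat
  have hKnatc : (Knat : ℤ) = K := Int.toNat_of_nonneg (by omega)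
  set linp : (Fin d → ℤ) → MvPolynomial (Fin d) ℂ :=
    fun h => ∑ m, MvPolynomial.C (h m : ℂ) * MvPolynomial.X m with hlinp
  have hevalLin : ∀ (h : Fin d → ℤ) (x : Fin d → ℂ),
      MvPolynomial.eval x (linp h) = ∑ m, (h m : ℂ) * x m := by
    intro h x
    rw [hlinp]
    rw [map_sum]
    simp
  set Ppoly : MvPolynomial (Fin d) ℂ :=
    (H.map (fun h => ∏ k ∈ Finset.range Knat, (linp h - MvPolynomial.C (k : ℂ)))).prod
    with hPpoly
  have hvanish : ∀ s ∈ zToC '' (NA A \ {m | ∃ m' ∈ NA A, m = colZ A j + m'}),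
      MvPolynomial.eval s Ppoly = 0 := by
    rintro spt ⟨m, ⟨hmNA, hmnot⟩, rfl⟩
    have hnotall : ¬ ∀ h ∈ H, h ⬝ᵥ (c0 + colZ A j) ≤ h ⬝ᵥ m := by
      intro hall
      apply hmnot
      refine ⟨fun k => m k - A k j, habs _ ?_, ?_⟩
      · apply hHcone
        intro h hh
        have hcalc : (fun k => (h k : ℚ)) ⬝ᵥ
            (fun k => (((fun k => m k - A k j) k : ℤ) : ℚ) - (c0 k : ℚ))
            = ((h ⬝ᵥ m - h ⬝ᵥ colZ A j - h ⬝ᵥ c0 : ℤ) : ℚ) := by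
          simp only [dotProduct, colZ]
          push_cast
          rw [← Finset.sum_sub_distrib, ← Finset.sum_sub_distrib]
          apply Finset.sum_congr rfl
          intro k _
          ring
        rw [hcalc]
        have hd2 := hall h hh
        rw [dotProduct_add] at hd2
        have : (0:ℤ) ≤ h ⬝ᵥ m - h ⬝ᵥ colZ A j - h ⬝ᵥ c0 := by omega
        exact_mod_cast this
      · funext k
        simp only [colZ, Pi.add_apply]
        ring
    push_neg at hnotall
    obtain ⟨h, hh, hlt⟩ := hnotall
    have h0m : 0 ≤ h ⬝ᵥ m := SRA_NA_dot_nonneg h (hHcols h hh) hmNA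
    have hmK : h ⬝ᵥ m < K := by
      have := hKbound h hh j
      omega
    rw [hPpoly, map_list_prod, List.map_map]
    refine List.prod_eq_zero (List.mem_map.mpr ⟨h, hh, ?_⟩)
    simp only [Function.comp_apply]
    rw [map_prod]
    apply Finset.prod_eq_zero (Finset.mem_range.mpr (show (h ⬝ᵥ m).toNat < Knat by omega))
    rw [map_sub, hevalLin, MvPolynomial.eval_C]
    have hdot : ∑ m', (h m' : ℂ) * (zToC m m') = ((h ⬝ᵥ m : ℤ) : ℂ) := by
      simp [zToC, dotProduct]
    rw [hdot]
    have hcastN : (((h ⬝ᵥ m).toNat : ℕ) : ℂ) = ((h ⬝ᵥ m : ℤ) : ℂ) := by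
      rw [← Int.toNat_of_nonneg h0m]
      push_cast
      rw [Int.toNat_of_nonneg h0m]
    rw [hcastN, sub_self]
  have heval0 := hq Ppoly hvanish
  have hne : MvPolynomial.eval qpt Ppoly ≠ 0 := by
    rw [hPpoly, map_list_prod, List.map_map]
    apply List.prod_ne_zero
    intro h0
    obtain ⟨h, hh, hef⟩ := List.mem_map.mp h0
    simp only [Function.comp_apply] at hef
    rw [map_prod] at hef
    set ρ : ℚ := (fun k => (h k : ℚ)) ⬝ᵥ β + (T : ℚ) * ((h ⬝ᵥ sZ : ℤ) : ℚ)
      + ((l : ℚ) + 1) * ((h ⬝ᵥ colZ A j : ℤ) : ℚ) with hρ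
    have hwq : MvPolynomial.eval qpt (linp h) = ((ρ : ℚ) : ℂ) := by
      rw [hevalLin, hρ]
      simp only [hqpt, Pi.add_apply, Pi.smul_apply, colC, colZ, smul_eq_mul, dotProduct]
      push_cast
      rw [Finset.mul_sum, Finset.mul_sum, ← Finset.sum_add_distrib, ← Finset.sum_add_distrib]
      apply Finset.sum_congr rfl
      intro k _
      ring
    have hρK : (K : ℚ) ≤ ρ := by
      have h1 := hTQ h hh
      have h2 : (0:ℚ) ≤ ((h ⬝ᵥ colZ A j : ℤ) : ℚ) := by exact_mod_cast hHcols h hh j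
      have h3 : (0:ℚ) ≤ ((l : ℚ) + 1) * ((h ⬝ᵥ colZ A j : ℤ) : ℚ) := by positivity
      rw [hρ]
      linarith
    obtain ⟨k, hkmem, hkz⟩ := Finset.prod_eq_zero_iff.mp hef
    rw [map_sub, hwq, MvPolynomial.eval_C] at hkz
    have hkeq : ρ = (k : ℚ) := by exact_mod_cast sub_eq_zero.mp hkz
    have hkK : ((k : ℚ)) < (K : ℚ) := by
      have hklt : (k : ℤ) < K := by
        have := Finset.mem_range.mp hkmem
        omega
      exact_mod_cast hklt
    linarith
  exact hne heval0
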